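/- arXiv:2005.10116 — 8 statements merged into one kernel-verified Lean document; each statement's English description precedes it below -/
import Mathlib

section
/- Let d ≥ 2 and let κ_{d-1} denote the Lebesgue volume of the closed unit ball in ℝ^{d-1}. Then for every point x in the closed unit ball of ℝ^d, the Lebesgue volume of the set difference B(0,1) \ B(x,1) of closed unit balls satisfies vol_d(B(0,1) \ B(x,1)) ≥ (2 κ_{d-1}/(d+1)) · ‖x‖^{(d+1)/2}. -/
/-!
Rotating, we may take the centre to be `(r, 0) ∈ ℝ × ℝ^(d-1)` with `r = ‖x‖`. The solid paraboloid
`{(t - 1, z) : ‖z‖² ≤ t < r}`, with vertex at the pole `(-1, 0)`, lies in `B(0,1)` because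
`(t - 1)² + t ≤ 1` for `0 ≤ t ≤ 1`, and misses `B(x,1)` because its first coordinate is `< r - 1`.
By Fubini its volume is `κ_(d-1) ∫₀^r t^((d-1)/2) dt = 2 κ_(d-1) r^((d+1)/2) / (d + 1)`.
-/

open MeasureTheory Metric

/-- The Lebesgue volume of the closed unit ball in `ℝ^m`. -/
noncomputable def unitBallVol (m : ℕ) : ℝ :=
  (volume (closedBall (0 : EuclideanSpace ℝ (Fin m)) 1)).toReal

open Module WithLp

section Isometry

variable {E F : Type*} [NormedAddCommGroup E] [InnerProductSpace ℝ E] [FiniteDimensional ℝ E]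
  [NormedAddCommGroup F] [InnerProductSpace ℝ F] [FiniteDimensional ℝ F]

theorem exists_linearIsometryEquiv_apply_eq (hEF : finrank ℝ E = finrank ℝ F) {x : E} {y : F}
    (hxy : ‖x‖ = ‖y‖) : ∃ f : E ≃ₗᵢ[ℝ] F, f x = y := by
  let g : E ≃ₗᵢ[ℝ] F := (stdOrthonormalBasis ℝ E).repr.trans
    ((stdOrthonormalBasis ℝ F).reindex (finCongr hEF.symm)).repr.symm
  exact ⟨g.trans (Submodule.reflection (ℝ ∙ (g x - y))ᗮ),
    Submodule.reflection_sub (by rw [g.norm_map, hxy])⟩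

variable [MeasurableSpace E] [BorelSpace E] [MeasurableSpace F] [BorelSpace F]

theorem volume_closedBall_diff_closedBall_eq_of_norm_eq (hEF : finrank ℝ E = finrank ℝ F)
    {x : E} {y : F} (hxy : ‖x‖ = ‖y‖) (R s : ℝ) :
    volume (closedBall (0 : E) R \ closedBall x s) =
      volume (closedBall (0 : F) R \ closedBall y s) := by
  obtain ⟨f, rfl⟩ := exists_linearIsometryEquiv_apply_eq hEF hxy
  have hpre : f ⁻¹' (closedBall 0 R \ closedBall (f x) s) = closedBall 0 R \ closedBall x s := by
    rw [Set.preimage_sdiff, f.preimage_closedBall, f.preimage_closedBall, map_zero,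
      f.symm_apply_apply]
  rw [← hpre, f.measurePreserving.measure_preimage
    (measurableSet_closedBall.diff measurableSet_closedBall).nullMeasurableSet]

end Isometry

theorem lintegral_Ico_zero_rpow {p r : ℝ} (hp : -1 < p) (hr : 0 ≤ r) :
    ∫⁻ t in Set.Ico 0 r, ENNReal.ofReal (t ^ p) = ENNReal.ofReal (r ^ (p + 1) / (p + 1)) := by
  have hint : IntegrableOn (fun t : ℝ => t ^ p) (Set.Ico 0 r) :=
    (intervalIntegrable_iff_integrableOn_Ico_of_le hr).mp
      (intervalIntegral.intervalIntegrable_rpow' hp)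
  rw [← ofReal_integral_eq_lintegral_ofReal hint
    ((ae_restrict_iff' measurableSet_Ico).mpr (ae_of_all _ fun t ht => Real.rpow_nonneg ht.1 p)),
    integral_Ico_eq_integral_Ioo, ← integral_Ioc_eq_integral_Ioo,
    ← intervalIntegral.integral_of_le hr, integral_rpow (Or.inl hp),
    Real.zero_rpow (by linarith), sub_zero]

def solidParaboloid (F : Type*) [Norm F] (r : ℝ) : Set (ℝ × F) :=
  {q | ‖q.2‖ ^ 2 ≤ q.1 ∧ q.1 < r}

section Paraboloid

variable {F : Type*} [NormedAddCommGroup F]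

theorem toLp_sub_one_mem_closedBall_diff_closedBall {r : ℝ} (hr : r ≤ 1) {q : ℝ × F}
    (hq : q ∈ solidParaboloid F r) :
    toLp 2 (q.1 - 1, q.2) ∈
      closedBall (0 : WithLp 2 (ℝ × F)) 1 \ closedBall (toLp 2 (r, 0)) 1 := by
  obtain ⟨hq2, hq1⟩ := hq
  have hnorm (a : ℝ) (z : F) : ‖toLp 2 (a, z)‖ ^ 2 = a ^ 2 + ‖z‖ ^ 2 := by
    simp [prod_norm_sq_eq_of_L2]
  refine ⟨?_, fun hmem => ?_⟩
  · rw [mem_closedBall_zero_iff, ← sq_le_one_iff₀ (norm_nonneg _), hnorm]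
    nlinarith
  · rw [mem_closedBall, dist_eq_norm, ← sq_le_one_iff₀ (norm_nonneg _), ← toLp_sub, Prod.mk_sub_mk,
      sub_zero, hnorm] at hmem
    nlinarith [sq_nonneg ‖q.2‖]

variable [InnerProductSpace ℝ F] [FiniteDimensional ℝ F] [MeasurableSpace F] [BorelSpace F]

theorem volume_setOf_norm_sq_le {t : ℝ} (ht : 0 ≤ t) :
    volume {z : F | ‖z‖ ^ 2 ≤ t} =
      ENNReal.ofReal (t ^ ((finrank ℝ F : ℝ) / 2)) * volume (closedBall (0 : F) 1) := by
  have hball : {z : F | ‖z‖ ^ 2 ≤ t} = closedBall 0 √t := by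
    ext z
    simp [Real.le_sqrt (norm_nonneg z) ht]
  rw [hball, Measure.addHaar_closedBall' _ _ (Real.sqrt_nonneg t), Real.sqrt_eq_rpow,
    ← Real.rpow_natCast, ← Real.rpow_mul ht, one_div_mul_eq_div]

theorem volume_solidParaboloid {r : ℝ} (hr : 0 ≤ r) :
    volume (solidParaboloid F r) =
      ENNReal.ofReal (r ^ ((finrank ℝ F : ℝ) / 2 + 1) / ((finrank ℝ F : ℝ) / 2 + 1)) *
        volume (closedBall (0 : F) 1) := by
  have hmeas : MeasurableSet (solidParaboloid F r) :=
    (measurableSet_le (by fun_prop) measurable_fst).inter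
      (measurableSet_lt measurable_fst measurable_const)
  have hslice : ∀ t, volume (α := F) (Prod.mk t ⁻¹' solidParaboloid F r) =
      (Set.Ico 0 r).indicator (fun t => volume {z : F | ‖z‖ ^ 2 ≤ t}) t := by
    intro t
    by_cases ht : t ∈ Set.Ico 0 r
    · rw [Set.indicator_of_mem ht]
      congr 1
      ext z
      simp [solidParaboloid, ht.2]
    · have hempty : Prod.mk t ⁻¹' solidParaboloid F r = ∅ :=
        Set.eq_empty_of_forall_notMem fun z hz => ht ⟨(sq_nonneg _).trans hz.1, hz.2⟩
      rw [Set.indicator_of_notMem ht, hempty, measure_empty]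
  rw [Measure.volume_eq_prod, Measure.prod_apply hmeas, lintegral_congr hslice,
    lintegral_indicator measurableSet_Ico,
    setLIntegral_congr_fun measurableSet_Ico fun t ht => volume_setOf_norm_sq_le ht.1,
    lintegral_mul_const' _ _ measure_closedBall_lt_top.ne,
    lintegral_Ico_zero_rpow (by linarith [show (0 : ℝ) ≤ finrank ℝ F / 2 by positivity]) hr]

theorem volume_solidParaboloid_le_volume_closedBall_diff_closedBall {r : ℝ} (hr : r ≤ 1) :
    volume (solidParaboloid F r) ≤
      volume (closedBall (0 : WithLp 2 (ℝ × F)) 1 \ closedBall (toLp 2 (r, 0)) 1) := by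
  have hφ : MeasurePreserving (fun q : ℝ × F => toLp 2 (q.1 - 1, q.2)) := by
    refine (WithLp.volume_preserving_toLp ℝ F).comp ?_
    rw [Measure.volume_eq_prod]
    exact (measurePreserving_sub_right volume 1).prod (MeasurePreserving.id volume)
  calc volume (solidParaboloid F r)
      ≤ volume ((fun q : ℝ × F => toLp 2 (q.1 - 1, q.2)) ⁻¹'
          (closedBall (0 : WithLp 2 (ℝ × F)) 1 \ closedBall (toLp 2 (r, 0)) 1)) :=
        measure_mono fun q hq => toLp_sub_one_mem_closedBall_diff_closedBall hr hq
    _ = _ := hφ.measure_preimage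
        (measurableSet_closedBall.diff measurableSet_closedBall).nullMeasurableSet

end Paraboloid

theorem stmt_0_general (d : ℕ) (x : EuclideanSpace ℝ (Fin d))
    (hx : x ∈ closedBall (0 : EuclideanSpace ℝ (Fin d)) 1) :
    2 * unitBallVol (d - 1) / (d + 1) * ‖x‖ ^ ((d + 1 : ℝ) / 2) ≤
      (volume (closedBall (0 : EuclideanSpace ℝ (Fin d)) 1 \ closedBall x 1)).toReal := by
  obtain _ | n := d
  · simp [Subsingleton.elim x 0]
  have hrank : finrank ℝ (EuclideanSpace ℝ (Fin (n + 1))) =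
      finrank ℝ (WithLp 2 (ℝ × EuclideanSpace ℝ (Fin n))) := by
    rw [(WithLp.linearEquiv 2 ℝ (ℝ × EuclideanSpace ℝ (Fin n))).finrank_eq, finrank_prod,
      finrank_self, finrank_euclideanSpace_fin, finrank_euclideanSpace_fin, add_comm]
  have hnorm : ‖x‖ = ‖toLp 2 (‖x‖, (0 : EuclideanSpace ℝ (Fin n)))‖ := by simp
  have hbound := volume_solidParaboloid_le_volume_closedBall_diff_closedBall
    (F := EuclideanSpace ℝ (Fin n)) (mem_closedBall_zero_iff.mp hx)
  rw [← volume_closedBall_diff_closedBall_eq_of_norm_eq hrank hnorm,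
    volume_solidParaboloid (norm_nonneg x), finrank_euclideanSpace_fin] at hbound
  have hfin : volume (closedBall (0 : EuclideanSpace ℝ (Fin (n + 1))) 1 \ closedBall x 1) ≠ ⊤ :=
    ((measure_mono Set.sdiff_subset).trans_lt measure_closedBall_lt_top).ne
  refine (le_of_eq ?_).trans (ENNReal.toReal_mono hfin hbound)
  rw [ENNReal.toReal_mul, ENNReal.toReal_ofReal (by positivity), unitBallVol,
    Nat.add_sub_cancel]
  have hexp : ((n + 1 : ℕ) + 1 : ℝ) / 2 = n / 2 + 1 := by push_cast; ring
  rw [hexp]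
  field_simp
  push_cast
  ring

/-- Lemma 4.1: for `x` in the closed unit ball of `ℝ^d`,
`vol (B(0,1) \ B(x,1)) ≥ (2 κ_{d-1}/(d+1)) ‖x‖^{(d+1)/2}`. -/
theorem stmt_0 (d : ℕ) (hd : 2 ≤ d) (x : EuclideanSpace ℝ (Fin d))
    (hx : x ∈ closedBall (0 : EuclideanSpace ℝ (Fin d)) 1) :
    2 * unitBallVol (d - 1) / (d + 1) * ‖x‖ ^ ((d + 1 : ℝ) / 2) ≤
      (volume (closedBall (0 : EuclideanSpace ℝ (Fin d)) 1 \ closedBall x 1)).toReal :=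
  stmt_0_general d x hx
end

section
/- Let d ≥ 2, let u be a unit vector in ℝ^d and let ε ∈ [0,1]. Then the Lebesgue volume of the spherical cap {w ∈ ℝ^d : ‖w‖ ≤ 1 and ⟨w,u⟩ ≥ 1−ε} equals κ_{d-1} · ∫_{1−ε}^{1} (1−r²)^{(d−1)/2} dr, and this quantity is at least (2 κ_{d-1}/(d+1)) · ε^{(d+1)/2}. -/
/-!
Rotating `u` to the first axis (a linear isometry, hence volume preserving) turns the cap into
`{(t, y) ∈ ℝ × ℝ^(d-1) : 1 - ε ≤ t, t² + ‖y‖² ≤ 1}`. Its slice at height `t` is the ball of radius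
`√(1 - t²)`, of volume `κ_(d-1) (1 - t²)^((d-1)/2)`, and Fubini gives the integral formula.
For the lower bound, `1 - r ≤ 1 - r²` on `[0, 1]` and `∫_(1-ε)^1 (1 - r)^p dr = ε^(p+1) / (p+1)`
with `p = (d-1)/2`.
-/

open MeasureTheory Metric RealInnerProductSpace

open Module Set

theorem rpow_div_le_integral_one_sub_sq_rpow {p ε : ℝ} (hp : 0 ≤ p) (hε0 : 0 ≤ ε) (hε1 : ε ≤ 1) :
    ε ^ (p + 1) / (p + 1) ≤ ∫ r in (1 - ε)..1, (1 - r ^ 2) ^ p := by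
  have hlin : ∫ r in (1 - ε)..1, (1 - r) ^ p = ε ^ (p + 1) / (p + 1) := by
    rw [intervalIntegral.integral_comp_sub_left (fun s => s ^ p), sub_self, sub_sub_cancel,
      integral_rpow (Or.inl (by linarith)), Real.zero_rpow (by linarith), sub_zero]
  rw [← hlin]
  refine intervalIntegral.integral_mono_on (by linarith) ?_ ?_ fun r ⟨hr0, hr1⟩ => ?_
  · exact (by fun_prop : Continuous fun r : ℝ => (1 - r) ^ p).intervalIntegrable _ _
  · exact (by fun_prop : Continuous fun r : ℝ => (1 - r ^ 2) ^ p).intervalIntegrable _ _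
  · exact Real.rpow_le_rpow (by linarith) (by nlinarith) hp

section

variable {F : Type*} [NormedAddCommGroup F] [InnerProductSpace ℝ F] [FiniteDimensional ℝ F]
  [MeasurableSpace F] [BorelSpace F]

theorem volume_closedBall_sqrt {c : ℝ} (hc : 0 ≤ c) :
    volume (closedBall (0 : F) √c) =
      ENNReal.ofReal (c ^ ((finrank ℝ F : ℝ) / 2)) * volume (closedBall (0 : F) 1) := by
  rw [Measure.addHaar_closedBall' _ _ (Real.sqrt_nonneg c), Real.sqrt_eq_rpow,
    ← Real.rpow_natCast, ← Real.rpow_mul hc, one_div_mul_eq_div]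

theorem volume_closedBall_eq_of_finrank_eq {n : ℕ} (hn : finrank ℝ F = n) (r : ℝ) :
    volume (closedBall (0 : F) r) = volume (closedBall (0 : EuclideanSpace ℝ (Fin n)) r) := by
  subst hn
  rw [← (stdOrthonormalBasis ℝ F).repr.measurePreserving.measure_preimage
    measurableSet_closedBall.nullMeasurableSet]
  congr
  ext
  simp

theorem volume_withLpProd_cap {a : ℝ} (ha : -1 ≤ a) (ha1 : a ≤ 1) :
    volume {p : WithLp 2 (ℝ × F) | ‖p‖ ≤ 1 ∧ a ≤ p.fst} =
      ENNReal.ofReal (∫ t in a..1, (1 - t ^ 2) ^ ((finrank ℝ F : ℝ) / 2)) *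
        volume (closedBall (0 : F) 1) := by
  set g : ℝ → ℝ := fun t => (1 - t ^ 2) ^ ((finrank ℝ F : ℝ) / 2)
  set S : Set (ℝ × F) := {q | q.1 ^ 2 + ‖q.2‖ ^ 2 ≤ 1 ∧ a ≤ q.1}
  have hS : MeasurableSet S := by
    refine (measurableSet_le (f := fun q : ℝ × F => q.1 ^ 2 + ‖q.2‖ ^ 2) ?_
      measurable_const).inter (measurableSet_le measurable_const measurable_fst)
    fun_prop
  have hpre : {p : WithLp 2 (ℝ × F) | ‖p‖ ≤ 1 ∧ a ≤ p.fst} = WithLp.ofLp ⁻¹' S := by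
    ext p
    rw [mem_preimage, mem_ofPred_eq, mem_ofPred_eq, ← sq_le_one_iff₀ (norm_nonneg p),
      WithLp.prod_norm_sq_eq_of_L2, Real.norm_eq_abs, sq_abs]
    rfl
  have hslice (t : ℝ) : volume (Prod.mk t ⁻¹' S) =
      (Icc a 1).indicator (fun t => ENNReal.ofReal (g t) * volume (closedBall (0 : F) 1)) t := by
    by_cases ht : t ∈ Icc a 1
    · have ht2 : 0 ≤ 1 - t ^ 2 := by nlinarith [ht.1, ht.2]
      rw [indicator_of_mem ht, ← volume_closedBall_sqrt ht2]
      congr 1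
      ext y
      simp only [S, mem_preimage, mem_ofPred_eq, mem_closedBall_zero_iff,
        Real.le_sqrt (norm_nonneg y) ht2, ht.1, and_true]
      constructor <;> intro h <;> linarith
    · rw [indicator_of_notMem ht, ← measure_empty (μ := (volume : Measure F))]
      congr 1
      ext y
      simp only [S, mem_preimage, mem_ofPred_eq, mem_empty_iff_false, iff_false, not_and]
      intro h hat
      exact ht ⟨hat, by nlinarith [norm_nonneg y]⟩
  have hg : Continuous g := by
    have : 0 ≤ (finrank ℝ F : ℝ) / 2 := by positivity
    fun_prop
  rw [hpre, (WithLp.volume_preserving_ofLp ℝ F).measure_preimage hS.nullMeasurableSet,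
    Measure.volume_eq_prod, Measure.prod_apply hS]
  simp_rw [hslice]
  rw [lintegral_indicator measurableSet_Icc, lintegral_mul_const _ (by fun_prop),
    intervalIntegral.integral_of_le ha1, ← integral_Icc_eq_integral_Ioc,
    ofReal_integral_eq_lintegral_ofReal hg.integrableOn_Icc
      (ae_restrict_of_forall_mem measurableSet_Icc fun t ht =>
        Real.rpow_nonneg (by nlinarith [ht.1, ht.2]) _)]
end

theorem exists_linearIsometryEquiv_fst_eq_inner {E : Type*} [NormedAddCommGroup E]
    [InnerProductSpace ℝ E] {u : E} (hu : ‖u‖ = 1) :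
    ∃ f : E ≃ₗᵢ[ℝ] WithLp 2 (ℝ × (ℝ ∙ u)ᗮ), ∀ w, (f w).fst = ⟪w, u⟫ := by
  let e := LinearIsometryEquiv.toSpanUnitSingleton (𝕜 := ℝ) u hu
  refine ⟨(ℝ ∙ u).orthogonalDecomposition.trans
    (LinearIsometryEquiv.withLpProdCongr 2 e.symm (LinearIsometryEquiv.refl ℝ _)), fun w => ?_⟩
  have : (ℝ ∙ u).orthogonalProjectionOnto w = e ⟪w, u⟫ := by
    ext
    simp [e, Submodule.starProjection_unit_singleton ℝ hu, real_inner_comm]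
  simp [this]

theorem volume_cap {E : Type*} [NormedAddCommGroup E] [InnerProductSpace ℝ E]
    [FiniteDimensional ℝ E] [MeasurableSpace E] [BorelSpace E] {u : E} (hu : ‖u‖ = 1)
    {n : ℕ} (hn : finrank ℝ E = n + 1) {a : ℝ} (ha : -1 ≤ a) (ha1 : a ≤ 1) :
    volume {w : E | ‖w‖ ≤ 1 ∧ a ≤ ⟪w, u⟫} =
      ENNReal.ofReal (∫ t in a..1, (1 - t ^ 2) ^ ((n : ℝ) / 2)) *
        volume (closedBall (0 : EuclideanSpace ℝ (Fin n)) 1) := by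
  obtain ⟨f, hf⟩ := exists_linearIsometryEquiv_fst_eq_inner hu
  have hK : finrank ℝ (ℝ ∙ u)ᗮ = n := by
    have : Fact (finrank ℝ E = n + 1) := ⟨hn⟩
    exact Submodule.finrank_orthogonal_span_singleton (by rintro rfl; simp at hu)
  have hpre : {w : E | ‖w‖ ≤ 1 ∧ a ≤ ⟪w, u⟫} = f ⁻¹' {p | ‖p‖ ≤ 1 ∧ a ≤ p.fst} := by
    ext w
    simp [hf]
  rw [hpre, f.measurePreserving.measure_preimage_emb f.toHomeomorph.measurableEmbedding,
    volume_withLpProd_cap ha ha1, hK, volume_closedBall_eq_of_finrank_eq hK]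

theorem stmt_1_general (d : ℕ) (u : EuclideanSpace ℝ (Fin d)) (hu : ‖u‖ = 1)
    (ε : ℝ) (hε0 : 0 ≤ ε) (hε1 : ε ≤ 1) :
    (volume {w : EuclideanSpace ℝ (Fin d) | ‖w‖ ≤ 1 ∧ 1 - ε ≤ ⟪w, u⟫}).toReal =
      unitBallVol (d - 1) * ∫ r in (1 - ε)..1, (1 - r ^ 2) ^ ((d - 1 : ℝ) / 2) ∧
    2 * unitBallVol (d - 1) / (d + 1) * ε ^ ((d + 1 : ℝ) / 2) ≤
      (volume {w : EuclideanSpace ℝ (Fin d) | ‖w‖ ≤ 1 ∧ 1 - ε ≤ ⟪w, u⟫}).toReal := by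
  obtain ⟨m, rfl⟩ : ∃ m, d = m + 1 := by
    refine Nat.exists_eq_add_one.mpr (Nat.pos_of_ne_zero ?_)
    rintro rfl
    simp [Subsingleton.elim u 0] at hu
  have hlower := rpow_div_le_integral_one_sub_sq_rpow (p := (m : ℝ) / 2) (by positivity) hε0 hε1
  have hvol : (volume {w : EuclideanSpace ℝ (Fin (m + 1)) | ‖w‖ ≤ 1 ∧ 1 - ε ≤ ⟪w, u⟫}).toReal =
      unitBallVol m * ∫ r in (1 - ε)..1, (1 - r ^ 2) ^ ((m : ℝ) / 2) := by
    rw [volume_cap hu (n := m) (by simp) (by linarith) (by linarith), ENNReal.toReal_mul,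
      ENNReal.toReal_ofReal ((by positivity : (0 : ℝ) ≤ _).trans hlower), mul_comm]
    rfl
  simp only [Nat.add_sub_cancel, Nat.cast_add, Nat.cast_one, add_sub_cancel_right, hvol,
    true_and]
  calc 2 * unitBallVol m / (m + 1 + 1) * ε ^ (((m : ℝ) + 1 + 1) / 2)
      = unitBallVol m * (ε ^ ((m : ℝ) / 2 + 1) / ((m : ℝ) / 2 + 1)) := by
        rw [show ((m : ℝ) + 1 + 1) / 2 = (m : ℝ) / 2 + 1 by ring]
        field_simp
        ring
    _ ≤ _ := mul_le_mul_of_nonneg_left hlower ENNReal.toReal_nonneg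

/-- The volume of the spherical cap `{w : ‖w‖ ≤ 1, ⟨w,u⟩ ≥ 1 - ε}` equals
`κ_{d-1} ∫_{1-ε}^1 (1 - r²)^{(d-1)/2} dr` and is at least
`(2 κ_{d-1}/(d+1)) ε^{(d+1)/2}`. -/
theorem stmt_1 (d : ℕ) (hd : 2 ≤ d) (u : EuclideanSpace ℝ (Fin d)) (hu : ‖u‖ = 1)
    (ε : ℝ) (hε0 : 0 ≤ ε) (hε1 : ε ≤ 1) :
    (volume {w : EuclideanSpace ℝ (Fin d) | ‖w‖ ≤ 1 ∧ 1 - ε ≤ ⟪w, u⟫}).toReal =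
      unitBallVol (d - 1) * ∫ r in (1 - ε)..1, (1 - r ^ 2) ^ ((d - 1 : ℝ) / 2) ∧
    2 * unitBallVol (d - 1) / (d + 1) * ε ^ ((d + 1 : ℝ) / 2) ≤
      (volume {w : EuclideanSpace ℝ (Fin d) | ‖w‖ ≤ 1 ∧ 1 - ε ≤ ⟪w, u⟫}).toReal :=
  stmt_1_general d u hu ε hε0 hε1
end

section
/- Let d ≥ 1 and k ≥ 1 be integers and a > 0, b > 0 be reals with b·a^d ≥ 1. Then ∫_a^∞ e^{−b r^d} r^{kd−1} dr ≤ (k!/(b·d)) · e^{−b a^d} · a^{d(k−1)}. -/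
/-!
Write `I n = ∫_a^∞ e^{-b x^d} x^n dx`. Integrating by parts against the primitive
`-e^{-b x^d} / (b d)` of `e^{-b x^d} x^{d-1}` gives
`I (n + d - 1) = e^{-b a^d} a^n / (b d) + n / (b d) · I (n - 1)`.
Taking `n = k d` and inducting on `k`, the hypothesis `b a^d ≥ 1` turns the factor `1 / b` into
`a^d`, and the constants add up because `1 + k · k! ≤ (k + 1)!`.
-/

open MeasureTheory Real Set Filter Topology Asymptotics Nat

section

variable {b : ℝ} {d : ℕ}

lemma exp_neg_mul_pow_le_exp_neg_mul (hd : 1 ≤ d) (hb : 0 < b) {x : ℝ} (hx : 1 ≤ x) :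
    exp (-(b * x ^ d)) ≤ exp (-(b * x)) := by
  gcongr
  exact le_self_pow₀ hx (by omega)

lemma tendsto_exp_neg_mul_pow_mul_pow_atTop (hd : 1 ≤ d) (hb : 0 < b) (n : ℕ) :
    Tendsto (fun x : ℝ => exp (-(b * x ^ d)) * x ^ n) atTop (𝓝 0) := by
  have h : Tendsto (fun x : ℝ => x ^ n * exp (-b * x)) atTop (𝓝 0) := by
    simpa only [rpow_natCast] using tendsto_rpow_mul_exp_neg_mul_atTop_nhds_zero n b hb
  refine squeeze_zero' ?_ ?_ h
  · filter_upwards [eventually_ge_atTop 0] with x hx using by positivity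
  · filter_upwards [eventually_ge_atTop 1] with x hx
    rw [mul_comm, neg_mul]
    exact mul_le_mul_of_nonneg_left (exp_neg_mul_pow_le_exp_neg_mul hd hb hx) (by positivity)

lemma integrableOn_exp_neg_mul_pow_mul_pow_Ioi (hd : 1 ≤ d) (hb : 0 < b) (n : ℕ) (a : ℝ) :
    IntegrableOn (fun x : ℝ => exp (-(b * x ^ d)) * x ^ n) (Ioi a) := by
  refine integrable_of_isBigO_exp_neg (half_pos hb) (by fun_prop) ?_
  -- `exp (-(b x^d)) x^n` is `exp (-(b/2) x^d) x^n`, which tends to `0`, times `exp (-(b/2) x^d)`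
  have hbounded := (tendsto_exp_neg_mul_pow_mul_pow_atTop hd (half_pos hb) n).isBigO_one ℝ
  have hdecay : (fun x : ℝ => exp (-(b / 2 * x ^ d))) =O[atTop] fun x => exp (-(b / 2) * x) := by
    refine IsBigO.of_bound 1 ?_
    filter_upwards [eventually_ge_atTop 1] with x hx
    rw [norm_of_nonneg (exp_pos _).le, norm_of_nonneg (exp_pos _).le, one_mul, neg_mul]
    exact exp_neg_mul_pow_le_exp_neg_mul hd (half_pos hb) hx
  refine (hbounded.mul hdecay).congr (fun x => ?_) (fun x => one_mul _)
  rw [mul_right_comm, ← exp_add]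
  ring_nf

lemma hasDerivAt_exp_neg_mul_pow_mul_pow (hd : 1 ≤ d) (hb : b ≠ 0) (n : ℕ) (x : ℝ) :
    HasDerivAt (fun x => -(exp (-(b * x ^ d)) * x ^ n) / (b * d))
      (exp (-(b * x ^ d)) * x ^ (n + d - 1) - n / (b * d) * (exp (-(b * x ^ d)) * x ^ (n - 1)))
      x := by
  have hexp := ((hasDerivAt_pow d x).const_mul b).neg.exp
  refine ((hexp.mul (hasDerivAt_pow n x)).neg.div_const (b * d)).congr_deriv ?_
  have hd0 : (d : ℝ) ≠ 0 := by positivity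
  rw [show n + d - 1 = n + (d - 1) by omega, pow_add]
  simp only [Pi.neg_apply]
  field_simp
  ring

lemma integral_exp_neg_mul_pow_mul_pow_add (hd : 1 ≤ d) (hb : 0 < b) (n : ℕ) (a : ℝ) :
    ∫ x in Ioi a, exp (-(b * x ^ d)) * x ^ (n + d - 1) =
      exp (-(b * a ^ d)) * a ^ n / (b * d) +
        n / (b * d) * ∫ x in Ioi a, exp (-(b * x ^ d)) * x ^ (n - 1) := by
  have hint := integrableOn_exp_neg_mul_pow_mul_pow_Ioi hd hb
  have hlim : Tendsto (fun x : ℝ => -(exp (-(b * x ^ d)) * x ^ n) / (b * d)) atTop (𝓝 0) := by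
    simpa using ((tendsto_exp_neg_mul_pow_mul_pow_atTop hd hb n).neg.div_const (b * d))
  have hFTC := integral_Ioi_of_hasDerivAt_of_tendsto (by fun_prop : Continuous _).continuousWithinAt
    (fun x _ => hasDerivAt_exp_neg_mul_pow_mul_pow hd hb.ne' n x)
    ((hint _ a).sub ((hint _ a).const_mul _)) hlim
  rw [integral_sub (hint _ a) ((hint _ a).const_mul _), integral_const_mul] at hFTC
  linear_combination hFTC

end

lemma pow_mul_le_mul_pow_mul_succ {a b : ℝ} {d : ℕ} (hb : 0 < b) (hba : 1 ≤ b * a ^ d)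
    (m : ℕ) : a ^ (d * m) ≤ b * a ^ (d * (m + 1)) := by
  have had : 0 < a ^ d := pos_of_mul_pos_right (one_pos.trans_le hba) hb.le
  rw [mul_add_one, pow_add, pow_mul, mul_left_comm]
  exact le_mul_of_one_le_right (pow_nonneg had.le m) hba

lemma one_add_mul_factorial_le_factorial_succ (n : ℕ) : 1 + n * n ! ≤ (n + 1)! := by
  rw [factorial_succ, succ_mul]
  linarith [factorial_pos n]

theorem stmt_4_general (d k : ℕ) (hd : 1 ≤ d) (hk : 1 ≤ k) (a b : ℝ) (hb : 0 < b)
    (hba : 1 ≤ b * a ^ d) :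
    ∫ r in Set.Ioi a, Real.exp (-(b * r ^ d)) * r ^ (k * d - 1) ≤
      (Nat.factorial k : ℝ) / (b * d) * Real.exp (-(b * a ^ d)) * a ^ (d * (k - 1)) := by
  obtain ⟨m, rfl⟩ := Nat.exists_eq_add_of_le' hk
  simp only [Nat.add_sub_cancel]
  clear hk
  induction m with
  | zero =>
    have h := integral_exp_neg_mul_pow_mul_pow_add hd hb 0 a
    simp only [zero_add, pow_zero, mul_one, CharP.cast_eq_zero, zero_div, zero_mul, add_zero] at h
    simp only [zero_add, one_mul, factorial_one, cast_one, mul_zero, pow_zero, mul_one]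
    rw [h, one_div_mul_eq_div]
  | succ m ih =>
    have hd0 : (d : ℝ) ≠ 0 := by positivity
    rw [add_mul, one_mul, integral_exp_neg_mul_pow_mul_pow_add hd hb, Nat.cast_mul,
      mul_div_mul_right _ _ hd0]
    set E := exp (-(b * a ^ d))
    have had : 0 < a ^ d := pos_of_mul_pos_right (one_pos.trans_le hba) hb.le
    have hpow : 0 ≤ a ^ (d * (m + 1)) := pow_mul a d (m + 1) ▸ pow_nonneg had.le (m + 1)
    have hfact : 1 + (m + 1 : ℝ) * (m + 1)! ≤ (m + 2)! :=
      mod_cast one_add_mul_factorial_le_factorial_succ (m + 1)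
    calc _ ≤ E * a ^ ((m + 1) * d) / (b * d) +
          (m + 1 : ℕ) / b * ((m + 1)! / (b * d) * E * (b * a ^ (d * (m + 1)))) := by
          gcongr
          exact ih.trans (by gcongr; exact pow_mul_le_mul_pow_mul_succ hb hba m)
      _ = (1 + (m + 1 : ℝ) * (m + 1)!) / (b * d) * E * a ^ (d * (m + 1)) := by
          rw [mul_comm (m + 1) d]
          field_simp
          push_cast
          ring
      _ ≤ (m + 2)! / (b * d) * E * a ^ (d * (m + 1)) := by
          gcongr

/-- Inequality (PDTestpart): for `d, k ≥ 1`, `a, b > 0` with `b a^d ≥ 1`,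
`∫_a^∞ e^{-b r^d} r^{kd-1} dr ≤ (k!/(b d)) e^{-b a^d} a^{d(k-1)}`. -/
theorem stmt_4 (d k : ℕ) (hd : 1 ≤ d) (hk : 1 ≤ k) (a b : ℝ) (ha : 0 < a) (hb : 0 < b)
    (hba : 1 ≤ b * a ^ d) :
    ∫ r in Set.Ioi a, Real.exp (-(b * r ^ d)) * r ^ (k * d - 1) ≤
      (Nat.factorial k : ℝ) / (b * d) * Real.exp (-(b * a ^ d)) * a ^ (d * (k - 1)) :=
  stmt_4_general d k hd hk a b hb hba
end

section
/- Fix an integer k ≥ 0 and for s > e define a_s := log s + k·log log s − log k!. Then the normalization s·e^{−a_s}·∑_{i=0}^{k} a_s^{i}/i! equals 1 + O((log log s)/(log s)) as s → ∞; that is, there exist constants C > 0 and s₀ > e such that for all s ≥ s₀, |s·e^{−a_s}·∑_{i=0}^{k} a_s^{i}/i! − 1| ≤ C·(log log s)/(log s). -/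
/-!
Since `s e^{-a_s} = k! / (log s)^k`, the normalization equals `(a_s / log s)^k` plus the
lower-order terms `k! a_s^i / (i! (log s)^k)`, `i < k`, each of size `O(1 / log s)` because
`|a_s| ≤ 2 log s`. Moreover `a_s / log s = 1 + O(log log s / log s)`, and `x ↦ x^k` is Lipschitz
near `1`.
-/

open Real

/-- The level `a_s = log s + k log log s - log k!` from Section 4. -/
noncomputable def aFun (k : ℕ) (s : ℝ) : ℝ :=
  Real.log s + k * Real.log (Real.log s) - Real.log (Nat.factorial k)

open Finset Filter
open scoped Nat

lemma abs_sum_range_pow_div_factorial_mul_le {a L : ℝ} (k : ℕ) (hL : 1 ≤ L)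
    (ha : |a| ≤ 2 * L) :
    |∑ i ∈ range k, a ^ i / i !| * L ≤ k * 2 ^ k * L ^ k := by
  have hterm : ∀ i ∈ range k, |a ^ i / i !| * L ≤ 2 ^ k * L ^ k := fun i hi ↦
    calc |a ^ i / i !| * L ≤ (2 * L) ^ i * L := by
          rw [abs_div, abs_pow, Nat.abs_cast]
          gcongr
          exact div_le_self (by positivity) (mod_cast i.factorial_pos) |>.trans
            (pow_le_pow_left₀ (abs_nonneg a) ha i)
      _ = 2 ^ i * L ^ (i + 1) := by ring
      _ ≤ 2 ^ k * L ^ k := by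
          have hik := mem_range.mp hi
          gcongr
          · norm_num
          · omega
  calc |∑ i ∈ range k, a ^ i / i !| * L ≤ ∑ i ∈ range k, |a ^ i / i !| * L := by
        rw [← sum_mul]; gcongr; exact abs_sum_le_sum_abs _ _
    _ ≤ ∑ _i ∈ range k, 2 ^ k * L ^ k := sum_le_sum hterm
    _ = k * 2 ^ k * L ^ k := by simp [mul_assoc]

lemma abs_factorial_div_pow_mul_sum_sub_one_le {a L : ℝ} (k : ℕ) (hL : 1 ≤ L)
    (haL : |a - L| ≤ L) :
    |k ! / L ^ k * (∑ i ∈ range (k + 1), a ^ i / i !) - 1| ≤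
      k * 2 ^ k * k ! / L + k * 2 ^ (k - 1) * |a - L| / L := by
  have hL0 : 0 < L := one_pos.trans_le hL
  have ha : |a| ≤ 2 * L := by linarith [abs_sub_abs_le_abs_sub a L, abs_of_pos hL0]
  have hsplit : k ! / L ^ k * (∑ i ∈ range (k + 1), a ^ i / i !) - 1 =
      k ! / L ^ k * (∑ i ∈ range k, a ^ i / i !) + ((a / L) ^ k - 1 ^ k) := by
    rw [sum_range_succ, div_pow]
    field_simp
    ring
  rw [hsplit]
  refine (abs_add_le _ _).trans (add_le_add ?_ ?_)
  · rw [abs_mul, abs_of_pos (by positivity), div_mul_eq_mul_div,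
      div_le_div_iff₀ (by positivity) hL0]
    calc k ! * |∑ i ∈ range k, a ^ i / i !| * L
        ≤ k ! * (k * 2 ^ k * L ^ k) := by
          rw [mul_assoc]
          exact mul_le_mul_of_nonneg_left (abs_sum_range_pow_div_factorial_mul_le k hL ha)
            (by positivity)
      _ = k * 2 ^ k * k ! * L ^ k := by ring
  · have hmax : max |a / L| |1| ≤ 2 := by
      rw [abs_one, abs_div, abs_of_pos hL0]
      exact max_le ((div_le_iff₀ hL0).mpr ha) one_le_two
    calc |(a / L) ^ k - 1 ^ k| ≤ |a / L - 1| * k * max |a / L| |1| ^ (k - 1) :=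
          abs_pow_sub_pow_le _ _ _
      _ ≤ |a - L| / L * k * 2 ^ (k - 1) := by
          rw [div_sub_one hL0.ne', abs_div, abs_of_pos hL0]
          gcongr
      _ = k * 2 ^ (k - 1) * |a - L| / L := by ring

lemma mul_exp_neg_aFun (k : ℕ) {s : ℝ} (hs : 1 < s) :
    s * exp (-aFun k s) = k ! / log s ^ k := by
  have hL : 0 < log s := log_pos hs
  rw [aFun, exp_neg, exp_sub, exp_add, exp_log (by linarith), ← Real.log_pow,
    exp_log (by positivity), exp_log (mod_cast k.factorial_pos)]
  field_simp

lemma abs_aFun_sub_log_le (k : ℕ) {s : ℝ} (hLL : 0 ≤ log (log s))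
    (hfac : log (k ! : ℝ) ≤ log (log s)) :
    |aFun k s - log s| ≤ (k + 1) * log (log s) := by
  have hfac0 : 0 ≤ log (k ! : ℝ) := log_nonneg (mod_cast k.factorial_pos)
  rw [aFun, abs_le]
  constructor <;> nlinarith [(Nat.cast_nonneg k : (0 : ℝ) ≤ k)]

lemma eventually_aFun_bounds (k : ℕ) :
    ∀ᶠ s in atTop, 1 ≤ log (log s) ∧ log (k ! : ℝ) ≤ log (log s) ∧
      (k + 1) * log (log s) ≤ log s := by
  have hLL := tendsto_log_atTop.comp tendsto_log_atTop
  have hk : (0 : ℝ) < k + 1 := by positivity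
  have hlittle := (isLittleO_log_id_atTop.comp_tendsto tendsto_log_atTop).bound (inv_pos.mpr hk)
  filter_upwards [hLL.eventually_ge_atTop 1, hLL.eventually_ge_atTop (log (k ! : ℝ)),
    tendsto_log_atTop.eventually_ge_atTop 0, hlittle] with s h1 hfac hL0 hbound
  refine ⟨h1, hfac, ?_⟩
  simp only [Function.comp_apply, id, norm_eq_abs, abs_of_nonneg hL0] at hbound h1
  rw [abs_of_nonneg (zero_le_one.trans h1)] at hbound
  rwa [← le_div_iff₀' hk, div_eq_inv_mul]

/-- `s e^{-a_s} ∑_{i=0}^k a_s^i/i! = 1 + O((log log s)/(log s))` as `s → ∞`. -/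
theorem stmt_5 (k : ℕ) :
    ∃ C > (0 : ℝ), ∃ s₀ > Real.exp 1, ∀ s ≥ s₀,
      |s * Real.exp (-(aFun k s)) *
          (∑ i ∈ Finset.range (k + 1), (aFun k s) ^ i / (Nat.factorial i : ℝ)) - 1| ≤
        C * (Real.log (Real.log s) / Real.log s) := by
  obtain ⟨s₁, hs₁⟩ := eventually_atTop.mp (eventually_aFun_bounds k)
  refine ⟨k * 2 ^ k * k ! + k * 2 ^ (k - 1) * (k + 1) + 1, by positivity,
    max s₁ (exp 1 + 1), lt_max_of_lt_right (by linarith), fun s hs ↦ ?_⟩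
  obtain ⟨hLL, hfac, hlog⟩ := hs₁ s (le_of_max_le_left hs)
  have hs1 : 1 < s := by linarith [exp_pos 1, le_of_max_le_right hs]
  have hL : 1 ≤ log s := by nlinarith [(Nat.cast_nonneg k : (0 : ℝ) ≤ k)]
  have hgap := abs_aFun_sub_log_le k (zero_le_one.trans hLL) hfac
  rw [mul_exp_neg_aFun k hs1]
  calc _ ≤ k * 2 ^ k * k ! / log s + k * 2 ^ (k - 1) * |aFun k s - log s| / log s :=
        abs_factorial_div_pow_mul_sum_sub_one_le k hL (hgap.trans hlog)
    _ ≤ k * 2 ^ k * k ! * log (log s) / log s +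
          k * 2 ^ (k - 1) * ((k + 1) * log (log s)) / log s := by
        gcongr ?_ / _ + _ * ?_ / _
        exact le_mul_of_one_le_right (by positivity) hLL
    _ = (k * 2 ^ k * k ! + k * 2 ^ (k - 1) * (k + 1)) * (log (log s) / log s) := by ring
    _ ≤ _ := mul_le_mul_of_nonneg_right (by linarith)
        (div_nonneg (zero_le_one.trans hLL) (zero_le_one.trans hL))
end

section
/- Let v_0, …, v_n be points in ℝ^d all at the same distance r from a point z (i.e. ‖v_i − z‖ = r for all i). Then for every point p in the convex hull of {v_0, …, v_n} there exists an index i with ‖p − v_i‖² ≤ r² − ‖p − z‖². In particular, the convex hull of {v_0, …, v_n} is contained in the union of the closed balls B(v_i, r). -/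
open Metric

/- The affine functional `x ↦ ⟪p - z, x - z⟫` takes the value `‖p - z‖²` at `p`, so by the
maximum principle it is at least `‖p - z‖²` at some vertex `v`. Expanding
`‖p - v‖² = ‖(p - z) - (v - z)‖²` with `‖v - z‖ = r` gives `‖p - v‖² ≤ r² - ‖p - z‖²`. -/

variable {E : Type*} [NormedAddCommGroup E] [InnerProductSpace ℝ E]

theorem exists_inner_ge_of_mem_convexHull {s : Set E} {p : E} (hp : p ∈ convexHull ℝ s)
    (u : E) : ∃ v ∈ s, inner ℝ u p ≤ inner ℝ u v :=
  ((innerₛₗ ℝ u).convexOn convex_univ).exists_ge_of_mem_convexHull (Set.subset_univ s) hp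

theorem exists_norm_sub_sq_le_sq_sub_of_mem_convexHull {s : Set E} {z : E} {r : ℝ}
    (hs : s ⊆ sphere z r) {p : E} (hp : p ∈ convexHull ℝ s) :
    ∃ v ∈ s, ‖p - v‖ ^ 2 ≤ r ^ 2 - ‖p - z‖ ^ 2 := by
  obtain ⟨v, hvs, hv⟩ := exists_inner_ge_of_mem_convexHull hp (p - z)
  refine ⟨v, hvs, ?_⟩
  have hvz : ‖v - z‖ = r := mem_sphere_iff_norm.mp (hs hvs)
  have hexpand : ‖p - v‖ ^ 2 = ‖p - z‖ ^ 2 - 2 * inner ℝ (p - z) (v - z) + ‖v - z‖ ^ 2 := by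
    rw [← norm_sub_sq_real, sub_sub_sub_cancel_right]
  have hinner : ‖p - z‖ ^ 2 ≤ inner ℝ (p - z) (v - z) := by
    rw [← real_inner_self_eq_norm_sq, inner_sub_right, inner_sub_right]
    linarith
  rw [hexpand, hvz]
  linarith

theorem convexHull_subset_biUnion_closedBall_of_subset_sphere {s : Set E} {z : E} {r : ℝ}
    (hs : s ⊆ sphere z r) : convexHull ℝ s ⊆ ⋃ v ∈ s, closedBall v r := by
  intro p hp
  obtain ⟨v, hvs, hv⟩ := exists_norm_sub_sq_le_sq_sub_of_mem_convexHull hs hp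
  have hr : 0 ≤ r := dist_nonneg.trans_eq (hs hvs)
  refine Set.mem_biUnion hvs (mem_closedBall.mpr ?_)
  rw [dist_eq_norm]
  nlinarith [norm_nonneg (p - v), sq_nonneg ‖p - z‖]

/-- A simplex inscribed in a sphere of radius `r` around `z` is covered by the balls
of radius `r` centered at its vertices, quantitatively:
for any `p` in the convex hull there is a vertex `v i` with
`‖p - v i‖² ≤ r² - ‖p - z‖²`. -/
theorem stmt_6 (d n : ℕ) (v : Fin (n + 1) → EuclideanSpace ℝ (Fin d))
    (z : EuclideanSpace ℝ (Fin d)) (r : ℝ) (hv : ∀ i, ‖v i - z‖ = r) :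
    (∀ p ∈ convexHull ℝ (Set.range v), ∃ i, ‖p - v i‖ ^ 2 ≤ r ^ 2 - ‖p - z‖ ^ 2) ∧
    convexHull ℝ (Set.range v) ⊆ ⋃ i, closedBall (v i) r := by
  have hsphere : Set.range v ⊆ sphere z r := by
    rintro _ ⟨i, rfl⟩
    exact mem_sphere_iff_norm.mpr (hv i)
  refine ⟨fun p hp => ?_, ?_⟩
  · obtain ⟨_, ⟨i, rfl⟩, hi⟩ := exists_norm_sub_sq_le_sq_sub_of_mem_convexHull hsphere hp
    exact ⟨i, hi⟩
  · simpa only [Set.biUnion_range] using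
      convexHull_subset_biUnion_closedBall_of_subset_sphere hsphere
end

section
/- Let ℓ ≥ 1 and m ≥ 0, and let x_1, …, x_ℓ and u_1, …, u_m be points in ℝ^d. Suppose there exist z₁ ∈ ℝ^d and r₁ > 0 with ‖x_i − z₁‖ = r₁ for all i and ‖u_j − z₁‖ = r₁ for all j, and there exist z₂ ∈ ℝ^d and r₂ ≥ r₁ with ‖u_j − z₂‖ = r₂ for all j and ‖x_i − z₂‖ > r₂ for all i. Then z₂ does not belong to the convex hull of {x_1, …, x_ℓ} ∪ {u_1, …, u_m}. -/
/-!
On points `p` of the sphere `S(z₁, r₁)` outside the open ball `B(z₂, r₂)`, the difference of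
powers `‖p - z₂‖² - ‖p - z₁‖²` is at least `r₂² - r₁² ≥ 0`. This difference is affine in `p`,
so the bound persists on the convex hull; at `p = z₂` it equals `-‖z₂ - z₁‖²`. Hence `z₂` in
the hull forces `z₁ = z₂` and `r₁ = r₂`, contradicting that the `x`'s lie outside `B(z₂, r₂)`.
-/

open RealInnerProductSpace

section PowerDifference

variable {E : Type*} [NormedAddCommGroup E] [InnerProductSpace ℝ E]

theorem norm_sub_sq_sub_norm_sub_sq (p a b : E) :
    ‖p - a‖ ^ 2 - ‖p - b‖ ^ 2 = 2 * ⟪b - a, p⟫ + (‖a‖ ^ 2 - ‖b‖ ^ 2) := by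
  rw [norm_sub_sq_real, norm_sub_sq_real, inner_sub_left, real_inner_comm a, real_inner_comm b]
  ring

theorem convex_setOf_le_norm_sub_sq_sub_norm_sub_sq (a b : E) (c : ℝ) :
    Convex ℝ {p : E | c ≤ ‖p - a‖ ^ 2 - ‖p - b‖ ^ 2} := by
  have hlin : IsLinearMap ℝ fun p : E => 2 * ⟪b - a, p⟫ :=
    ⟨fun p q => by rw [inner_add_right, mul_add],
      fun t p => by rw [real_inner_smul_right, smul_eq_mul]; ring⟩
  simp_rw [norm_sub_sq_sub_norm_sub_sq, ← sub_le_iff_le_add]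
  exact convex_halfSpace_ge hlin _

theorem le_norm_sub_sq_sub_norm_sub_sq_of_mem_convexHull {s : Set E} {a b p : E} {c : ℝ}
    (hs : ∀ q ∈ s, c ≤ ‖q - a‖ ^ 2 - ‖q - b‖ ^ 2) (hp : p ∈ convexHull ℝ s) :
    c ≤ ‖p - a‖ ^ 2 - ‖p - b‖ ^ 2 :=
  convexHull_min hs (convex_setOf_le_norm_sub_sq_sub_norm_sub_sq a b c) hp

end PowerDifference

theorem stmt_7_general (d ℓ m : ℕ) (hℓ : 1 ≤ ℓ)
    (x : Fin ℓ → EuclideanSpace ℝ (Fin d)) (u : Fin m → EuclideanSpace ℝ (Fin d))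
    (z₁ z₂ : EuclideanSpace ℝ (Fin d)) (r₁ r₂ : ℝ)
    (hx₁ : ∀ i, ‖x i - z₁‖ = r₁) (hu₁ : ∀ j, ‖u j - z₁‖ = r₁)
    (hr : r₁ ≤ r₂)
    (hu₂ : ∀ j, ‖u j - z₂‖ = r₂) (hx₂ : ∀ i, r₂ < ‖x i - z₂‖) :
    z₂ ∉ convexHull ℝ (Set.range x ∪ Set.range u) := by
  intro hz
  let i₀ : Fin ℓ := ⟨0, hℓ⟩
  have hr₁ : 0 ≤ r₁ := hx₁ i₀ ▸ norm_nonneg _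
  have hpow : ∀ q ∈ Set.range x ∪ Set.range u, r₂ ^ 2 - r₁ ^ 2 ≤ ‖q - z₂‖ ^ 2 - ‖q - z₁‖ ^ 2 := by
    rintro q (⟨i, rfl⟩ | ⟨j, rfl⟩)
    · rw [hx₁ i]
      have := pow_le_pow_left₀ (hr₁.trans hr) (hx₂ i).le 2
      linarith
    · rw [hu₁ j, hu₂ j]
  have hz₂ := le_norm_sub_sq_sub_norm_sub_sq_of_mem_convexHull hpow hz
  rw [sub_self, norm_zero] at hz₂
  have hdist : ‖z₂ - z₁‖ = 0 := by nlinarith [norm_nonneg (z₂ - z₁)]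
  rw [norm_sub_eq_zero_iff] at hdist
  have := hx₂ i₀
  rw [hdist, hx₁ i₀] at this
  exact this.not_ge hr

/-- First step of Lemma 6.2: if the points `x` and `u` lie on a sphere of radius `r₁`
around `z₁`, the points `u` lie on a sphere of radius `r₂ ≥ r₁` around `z₂`, and all the
points `x` lie strictly outside the ball `B(z₂, r₂)`, then `z₂` is not in the convex hull
of the `x`'s and `u`'s. -/
theorem stmt_7 (d ℓ m : ℕ) (hℓ : 1 ≤ ℓ)
    (x : Fin ℓ → EuclideanSpace ℝ (Fin d)) (u : Fin m → EuclideanSpace ℝ (Fin d))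
    (z₁ z₂ : EuclideanSpace ℝ (Fin d)) (r₁ r₂ : ℝ) (hr₁ : 0 < r₁)
    (hx₁ : ∀ i, ‖x i - z₁‖ = r₁) (hu₁ : ∀ j, ‖u j - z₁‖ = r₁)
    (hr : r₁ ≤ r₂)
    (hu₂ : ∀ j, ‖u j - z₂‖ = r₂) (hx₂ : ∀ i, r₂ < ‖x i - z₂‖) :
    z₂ ∉ convexHull ℝ (Set.range x ∪ Set.range u) :=
  stmt_7_general d ℓ m hℓ x u z₁ z₂ r₁ r₂ hx₁ hu₁ hr hu₂ hx₂
end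

section
/- Let a ∈ (0,1] and let x, y, z, w ∈ ℝ^d with x ≠ y, ‖z − x‖ = ‖z − y‖ = ‖x − y‖/(2a), and ⟨w − y, y − z⟩ ≤ 0. Then ⟨w − y, y − x⟩ ≤ √(1 − a²) · ‖w − y‖ · ‖x − y‖. -/
/-!
Put `v = y - x`, `e = y - z`, `u = w - y`. Equidistance of `z` from `x` and `y` gives
`2⟪v, e⟫ = ‖v‖²`, and with `‖e‖ = ‖v‖ / (2a)` this makes `v - 2a² • e` the component of `v`
orthogonal to `e`, of norm `√(1 - a²) ‖v‖`. Since `⟪u, e⟫ ≤ 0`, removing the multiple of `e`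
can only increase `⟪u, ·⟫`, and Cauchy–Schwarz finishes.
-/

open RealInnerProductSpace

section

variable {E : Type*} [NormedAddCommGroup E] [InnerProductSpace ℝ E]

theorem real_inner_le_norm_mul_norm_sub_smul {u v e : E} {t : ℝ} (ht : 0 ≤ t)
    (hue : ⟪u, e⟫ ≤ 0) : ⟪u, v⟫ ≤ ‖u‖ * ‖v - t • e‖ :=
  calc ⟪u, v⟫ = ⟪u, v - t • e⟫ + t * ⟪u, e⟫ := by
        rw [inner_sub_right, real_inner_smul_right]; ring
    _ ≤ ⟪u, v - t • e⟫ := by linarith [mul_nonpos_of_nonneg_of_nonpos ht hue]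
    _ ≤ ‖u‖ * ‖v - t • e‖ := real_inner_le_norm _ _

theorem two_mul_real_inner_eq_norm_sq_of_norm_sub_eq {v e : E} (h : ‖v - e‖ = ‖e‖) :
    2 * ⟪v, e⟫ = ‖v‖ ^ 2 := by
  have := norm_sub_sq_real v e
  rw [h] at this
  linarith

theorem norm_sub_smul_sq_of_norm_sub_eq {v e : E} {a : ℝ} (ha : a ≠ 0)
    (hve : ‖v - e‖ = ‖e‖) (he : ‖e‖ = ‖v‖ / (2 * a)) :
    ‖v - (2 * a ^ 2) • e‖ ^ 2 = (1 - a ^ 2) * ‖v‖ ^ 2 := by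
  have hinner := two_mul_real_inner_eq_norm_sq_of_norm_sub_eq hve
  have he' : 2 * a * ‖e‖ = ‖v‖ := by rw [he]; field_simp
  rw [norm_sub_sq_real, real_inner_smul_right, norm_smul, Real.norm_eq_abs,
    abs_of_nonneg (by positivity)]
  linear_combination (-2 * a ^ 2) * hinner + a ^ 2 * (2 * a * ‖e‖ + ‖v‖) * he'

theorem real_inner_le_sqrt_mul_of_norm_sub_eq {u v e : E} {a : ℝ} (ha : a ≠ 0)
    (hve : ‖v - e‖ = ‖e‖) (he : ‖e‖ = ‖v‖ / (2 * a)) (hue : ⟪u, e⟫ ≤ 0) :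
    ⟪u, v⟫ ≤ √(1 - a ^ 2) * ‖u‖ * ‖v‖ := by
  have hnorm : ‖v - (2 * a ^ 2) • e‖ = √(1 - a ^ 2) * ‖v‖ := by
    rw [← Real.sqrt_sq (norm_nonneg _), norm_sub_smul_sq_of_norm_sub_eq ha hve he,
      Real.sqrt_mul' _ (sq_nonneg _), Real.sqrt_sq (norm_nonneg _)]
  calc ⟪u, v⟫ ≤ ‖u‖ * ‖v - (2 * a ^ 2) • e‖ :=
        real_inner_le_norm_mul_norm_sub_smul (by positivity) hue
    _ = √(1 - a ^ 2) * ‖u‖ * ‖v‖ := by rw [hnorm]; ring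

end

theorem stmt_8_general (d : ℕ) (a : ℝ) (ha0 : 0 < a)
    (x y z w : EuclideanSpace ℝ (Fin d))
    (hzx : ‖z - x‖ = ‖x - y‖ / (2 * a)) (hzy : ‖z - y‖ = ‖x - y‖ / (2 * a))
    (hw : ⟪w - y, y - z⟫ ≤ 0) :
    ⟪w - y, y - x⟫ ≤ Real.sqrt (1 - a ^ 2) * ‖w - y‖ * ‖x - y‖ := by
  have hve : ‖(y - x) - (y - z)‖ = ‖y - z‖ := by
    rw [sub_sub_sub_cancel_left, hzx, norm_sub_rev y z, hzy]
  have he : ‖y - z‖ = ‖y - x‖ / (2 * a) := by rw [norm_sub_rev, hzy, norm_sub_rev]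
  rw [norm_sub_rev x y]
  exact real_inner_le_sqrt_mul_of_norm_sub_eq ha0.ne' hve he hw

/-- Angle estimate from the proof of Lemma 5.1: if `z` is equidistant from `x ≠ y`
at distance `‖x-y‖/(2a)` with `a ∈ (0,1]`, and `⟨w-y, y-z⟩ ≤ 0`, then the cosine of
the angle between `w-y` and `y-x` is at most `√(1-a²)`. -/
theorem stmt_8 (d : ℕ) (a : ℝ) (ha0 : 0 < a) (ha1 : a ≤ 1)
    (x y z w : EuclideanSpace ℝ (Fin d)) (hxy : x ≠ y)
    (hzx : ‖z - x‖ = ‖x - y‖ / (2 * a)) (hzy : ‖z - y‖ = ‖x - y‖ / (2 * a))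
    (hw : ⟪w - y, y - z⟫ ≤ 0) :
    ⟪w - y, y - x⟫ ≤ Real.sqrt (1 - a ^ 2) * ‖w - y‖ * ‖x - y‖ :=
  stmt_8_general d a ha0 x y z w hzx hzy hw
end

section
/- Let d ≥ 1 and let v_0, …, v_d ∈ ℝ^d be affinely independent points all at distance r > 0 from a point z ∈ ℝ^d. For each i let H_i denote the affine span of {v_j : j ≠ i}. If for every i the Lebesgue volume of the set {w ∈ B(z,r) : w and v_i lie strictly on opposite sides of H_i} is strictly less than half the volume of B(z,r), then z belongs to the convex hull of {v_0, …, v_d}. -/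
/-!
If the circumcenter `z` were outside the simplex, some barycentric coordinate of `z` would be
negative, i.e. `z` would lie strictly beyond some facet hyperplane `H_i`. The point reflection
through `z` preserves the ball and maps the closed half-space of `H_i` containing `v i` into the
open one not containing it, so the cap beyond `H_i` holds at least half the ball's volume.
-/

open MeasureTheory Metric

theorem AffineBasis.sOppSide_affineSpan_image_compl_iff {R V P : Type*} [Field R] [LinearOrder R]
    [IsStrictOrderedRing R] [AddCommGroup V] [Module R V] [AddTorsor V P] {n : ℕ} [NeZero n]
    (b : AffineBasis (Fin (n + 1)) R P) (i : Fin (n + 1)) (p : P) :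
    (affineSpan R (b '' {i}ᶜ)).SOppSide p (b i) ↔ b.coord i p < 0 := by
  let s : Affine.Simplex R P n := ⟨b, b.ind⟩
  have h := s.sOppSide_affineSpan_faceOpposite_point_right_iff (b.sum_coord_apply_eq_one p) (i := i)
  rwa [s.range_faceOpposite_points, b.affineCombination_coord_eq_self] at h

theorem AffineMap.measure_closedBall_le_two_mul_measure_inter_lt_zero {E : Type*}
    [NormedAddCommGroup E] [NormedSpace ℝ E] [FiniteDimensional ℝ E] [MeasurableSpace E]
    [BorelSpace E] (μ : Measure E) [μ.IsAddHaarMeasure] (f : E →ᵃ[ℝ] ℝ) {z : E} (hz : f z < 0)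
    (r : ℝ) :
    μ (closedBall z r) ≤ 2 * μ (closedBall z r ∩ {x | f x < 0}) := by
  set S := closedBall z r ∩ {x | f x < 0}
  let σ : E → E := fun w => (z + z) - w
  have hσ : MeasurePreserving σ μ μ := Measure.measurePreserving_sub_left μ (z + z)
  have hfσ : ∀ w, f (σ w) = 2 * f z - f w := fun w => by
    rw [show σ w = (z - w) +ᵥ z by simp only [σ, vadd_eq_add]; abel, f.map_vadd, ← vsub_eq_sub,
      f.linearMap_vsub, vsub_eq_sub, vadd_eq_add]
    ring
  have hcover : closedBall z r ⊆ S ∪ σ ⁻¹' S := by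
    intro w hw
    by_cases hfw : f w < 0
    · exact Or.inl ⟨hw, hfw⟩
    · refine Or.inr ⟨?_, ?_⟩
      · rw [mem_closedBall, dist_eq_norm, show σ w - z = z - w by simp only [σ]; abel,
          norm_sub_rev, ← dist_eq_norm]
        exact hw
      · show f (σ w) < 0
        rw [hfσ]
        linarith
  have hS : MeasurableSet S :=
    measurableSet_closedBall.inter (measurableSet_lt f.continuous_of_finiteDimensional.measurable
      measurable_const)
  calc μ (closedBall z r) ≤ μ (S ∪ σ ⁻¹' S) := measure_mono hcover
    _ ≤ μ S + μ (σ ⁻¹' S) := measure_union_le _ _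
    _ = 2 * μ S := by rw [hσ.measure_preimage hS.nullMeasurableSet, two_mul]

theorem stmt_11_general (d : ℕ) (hd : 1 ≤ d) (v : Fin (d + 1) → EuclideanSpace ℝ (Fin d))
    (hv : AffineIndependent ℝ v) (z : EuclideanSpace ℝ (Fin d)) (r : ℝ)
    (hcap : ∀ i, volume {w ∈ closedBall z r |
        (affineSpan ℝ (v '' ({i}ᶜ : Set (Fin (d + 1))))).SOppSide w (v i)} <
      volume (closedBall z r) / 2) :
    z ∈ convexHull ℝ (Set.range v) := by
  have : NeZero d := NeZero.of_pos hd
  have hspan : affineSpan ℝ (Set.range v) = ⊤ := by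
    rw [hv.affineSpan_eq_top_iff_card_eq_finrank_add_one]
    simp
  let b : AffineBasis (Fin (d + 1)) ℝ (EuclideanSpace ℝ (Fin d)) := ⟨v, hv, hspan⟩
  by_contra hz
  obtain ⟨i, hi⟩ : ∃ i, b.coord i z < 0 := by
    rw [show v = ⇑b from rfl, b.convexHull_eq_nonneg_coord] at hz
    simpa using hz
  have hcap_ge : volume (closedBall z r) ≤ 2 * volume {w ∈ closedBall z r |
      (affineSpan ℝ (v '' ({i}ᶜ : Set (Fin (d + 1))))).SOppSide w (v i)} :=
    ((b.coord i).measure_closedBall_le_two_mul_measure_inter_lt_zero volume hi r).trans <| by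
      gcongr
      exact fun w ⟨hwB, hw⟩ => ⟨hwB, (b.sOppSide_affineSpan_image_compl_iff i w).2 hw⟩
  rw [mul_comm] at hcap_ge
  exact hcap_ge.not_gt (ENNReal.mul_lt_of_lt_div (hcap i))

/-- If `v 0, …, v d` is a `d`-simplex inscribed in the sphere of radius `r` around `z`
and for each facet hyperplane `H_i` the volume of the cap of `B(z,r)` strictly beyond
`H_i` (on the side opposite to `v i`) is less than half the ball's volume, then the
circumcenter `z` lies in the simplex. -/
theorem stmt_11 (d : ℕ) (hd : 1 ≤ d) (v : Fin (d + 1) → EuclideanSpace ℝ (Fin d))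
    (hv : AffineIndependent ℝ v) (z : EuclideanSpace ℝ (Fin d)) (r : ℝ) (hr : 0 < r)
    (hdist : ∀ i, ‖v i - z‖ = r)
    (hcap : ∀ i, volume {w ∈ closedBall z r |
        (affineSpan ℝ (v '' ({i}ᶜ : Set (Fin (d + 1))))).SOppSide w (v i)} <
      volume (closedBall z r) / 2) :
    z ∈ convexHull ℝ (Set.range v) :=
  stmt_11_general d hd v hv z r hcap
end
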